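/- arXiv:2512.16926 — 2 statements merged into one kernel-verified Lean document; each statement's English description precedes it below -/
import Mathlib

section
/- In a non-preemptive (limited-preemption at subtask boundaries) uniprocessor schedule generated by the two-queue policy, if the child stack's monotone-push invariant and the root heap property both hold initially (both empty), then they hold as invariants after every release and scheduling operation defined by the release and scheduling algorithms. -/
/-- State of the two-queue events executor: a root max-heap (modelled as a
multiset of priorities), a child LIFO stack (head = top), the
`latest_priority` register, and the optional priority of the running subtask. -/
structure ExecState where
  heap : Multiset ℤ
  stack : List ℤ
  latest : ℤ
  running : Option ℤ

/-- Operations of the release and scheduling algorithms. -/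
inductive Step : ExecState → ExecState → Prop
  /-- release-root p: push a root event of priority `p` onto the heap. -/
  | releaseRoot (s : ExecState) (p : ℤ) :
      Step s ⟨p ::ₘ s.heap, s.stack, s.latest, s.running⟩
  /-- release-child: a child released at the completion of the running subtask
  is pushed onto the stack with priority `latest_priority`; the running subtask
  has just completed. -/
  | releaseChild (s : ExecState) (r : ℤ) (hr : s.running = some r) :
      Step s ⟨s.heap, s.latest :: s.stack, s.latest, none⟩
  /-- schedule the root-queue top `m` (a maximum of the heap) when its priority
  exceeds the child-stack top's. -/
  | schedRoot (s : ExecState) (m : ℤ) (hm : m ∈ s.heap)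
      (hmax : ∀ x ∈ s.heap, x ≤ m)
      (hgt : ∀ c, s.stack.head? = some c → c < m) :
      Step s ⟨s.heap.erase m, s.stack, m, some m⟩
  /-- schedule the child-stack top otherwise. -/
  | schedChild (s : ExecState) (c : ℤ) (rest : List ℤ)
      (hs : s.stack = c :: rest)
      (hge : ∀ x ∈ s.heap, x ≤ c) :
      Step s ⟨s.heap, rest, c, some c⟩

/-- The invariants: (1) every stack element has priority ≤ `latest_priority`;
(2) the stack is sorted with its top a maximum (monotone-push property);
(3) if a subtask is running, every stack element has priority ≤ its priority
(the running priority coincides with `latest_priority`). -/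
def ExecInv (s : ExecState) : Prop :=
  (∀ x ∈ s.stack, x ≤ s.latest) ∧
  s.stack.Pairwise (· ≥ ·) ∧
  (∀ r : ℤ, s.running = some r → r = s.latest ∧ ∀ x ∈ s.stack, x ≤ r)

theorem List.forall_le_of_pairwise_ge {α : Type*} [Preorder α] {l : List α} {m : α}
    (hl : l.Pairwise (· ≥ ·)) (hhead : ∀ c, l.head? = some c → c ≤ m) : ∀ x ∈ l, x ≤ m := by
  cases l with
  | nil => simp
  | cons c rest =>
    have hc : c ≤ m := hhead c rfl
    intro x hx
    rcases List.mem_cons.1 hx with rfl | hx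
    · exact hc
    · exact (List.rel_of_pairwise_cons hl hx).trans hc

namespace ExecInv

theorem of_idle {heap : Multiset ℤ} {stack : List ℤ} {latest : ℤ}
    (hle : ∀ x ∈ stack, x ≤ latest) (hsorted : stack.Pairwise (· ≥ ·)) :
    ExecInv ⟨heap, stack, latest, none⟩ :=
  ⟨hle, hsorted, by simp⟩

theorem of_running_latest {heap : Multiset ℤ} {stack : List ℤ} {latest : ℤ}
    (hle : ∀ x ∈ stack, x ≤ latest) (hsorted : stack.Pairwise (· ≥ ·)) :
    ExecInv ⟨heap, stack, latest, some latest⟩ :=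
  ⟨hle, hsorted, by rintro r ⟨⟩; exact ⟨rfl, hle⟩⟩

theorem step {s s' : ExecState} (hs : ExecInv s) (h : Step s s') : ExecInv s' := by
  obtain ⟨hle, hsorted, hrunning⟩ := hs
  cases h with
  | releaseRoot p => exact ⟨hle, hsorted, hrunning⟩
  | releaseChild r _ =>
    exact of_idle (List.forall_mem_cons.2 ⟨le_rfl, hle⟩) (List.pairwise_cons.2 ⟨hle, hsorted⟩)
  | schedRoot m _ _ hgt =>
    exact of_running_latest (List.forall_le_of_pairwise_ge hsorted fun c hc => (hgt c hc).le)
      hsorted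
  | schedChild c rest hstack _ =>
    rw [hstack] at hsorted
    exact of_running_latest (List.pairwise_cons.1 hsorted).1 hsorted.of_cons

end ExecInv

/-- Starting from any state satisfying the invariants (in particular the
initial state with both queues empty), every release and scheduling operation
preserves the invariants. -/
theorem stmt_12 :
    (∀ l : ℤ, ExecInv ⟨0, [], l, none⟩) ∧
    (∀ s s' : ExecState, ExecInv s → Step s s' → ExecInv s') :=
  ⟨fun _ => ExecInv.of_idle (by simp) List.Pairwise.nil, fun _ _ => ExecInv.step⟩
end

section
/- If each job of a subscription C has at most one instance present in its message queue at any time (queue size ≤ 1 invariant), then FIFO message delivery assigns to each scheduled job of C exactly the message produced by the parent completion that triggered that job; i.e., no job-message mismatch occurs. -/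
/-- Operations on the message queue of subscription C: a parent completion
inserts the message that triggered a job of C, or a scheduled job of C removes
one message. -/
inductive Op (α : Type*) : Type _
  | ins (a : α) : Op α
  | rem : Op α

/-- FIFO message delivery: insert at the back, remove the oldest. -/
def runFIFO {α : Type*} (q : List α) : List (Op α) → List (Option α)
  | [] => []
  | Op.ins a :: ops => runFIFO (q ++ [a]) ops
  | Op.rem :: ops => q.head? :: runFIFO q.tail ops

/-- The correct per-trigger assignment: each scheduled job of C receives
exactly the message produced by the parent completion that triggered it, i.e.
the most recently inserted message. -/
def runCorrect {α : Type*} (last : Option α) : List (Op α) → List (Option α)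
  | [] => []
  | Op.ins a :: ops => runCorrect (some a) ops
  | Op.rem :: ops => last :: runCorrect (none : Option α) ops

/-- The invariant that the queue never holds more than one message. -/
inductive Bounded {α : Type*} : List α → List (Op α) → Prop
  | nil (q : List α) : q.length ≤ 1 → Bounded q []
  | ins (q : List α) (a : α) (ops : List (Op α)) : q.length ≤ 1 →
      (q ++ [a]).length ≤ 1 → Bounded (q ++ [a]) ops → Bounded q (Op.ins a :: ops)
  | rem (q : List α) (ops : List (Op α)) : q.length ≤ 1 →
      Bounded q.tail ops → Bounded q (Op.rem :: ops)

lemma List.eq_nil_of_length_append_singleton_le_one {α : Type*} {q : List α} {a : α}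
    (h : (q ++ [a]).length ≤ 1) : q = [] := by
  simpa using h

lemma List.tail_eq_nil_of_length_le_one {α : Type*} {q : List α} (h : q.length ≤ 1) :
    q.tail = [] := by
  rw [← List.length_eq_zero_iff, List.length_tail]
  omega

/- A queue of length at most one has as its head the most recent insertion not yet consumed,
which is exactly what the per-trigger assignment delivers. -/
theorem runFIFO_eq_runCorrect_head? {α : Type*} {q : List α} {ops : List (Op α)}
    (hb : Bounded q ops) : runFIFO q ops = runCorrect q.head? ops := by
  induction hb with
  | nil => rfl
  | ins q a ops _ hlen _ ih =>
    obtain rfl := List.eq_nil_of_length_append_singleton_le_one hlen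
    simpa [runFIFO, runCorrect] using ih
  | rem q ops hlen _ ih =>
    rw [runFIFO, runCorrect, ih, List.tail_eq_nil_of_length_le_one hlen, List.head?_nil]

/-- If the message queue of subscription C holds at most one message at all
times, then FIFO message delivery assigns to each scheduled job of C exactly
the message produced by its own triggering parent completion: no job-message
mismatch occurs. -/
theorem stmt_14 {α : Type*} (ops : List (Op α))
    (hb : Bounded ([] : List α) ops) :
    runFIFO ([] : List α) ops = runCorrect (none : Option α) ops := by
  simpa using runFIFO_eq_runCorrect_head? hb
end
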